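/- Let R = A + U* and S = B + V* be hyperlinear subsets of ℕ^m, and J the set of strongly unbounded coordinates for R and S. If R and S are not separable by a recognizable subset of ℕ^m, then the intersection (A + U* − U_J*) ∩ (B + V* − V_J*) in ℤ^m is non-empty. -/

import Mathlib

/-!
Fix a threshold `N` beyond which any coordinate where a point of `R = A + U*` and a point of
`S = B + V*` differ is strongly unbounded (a pigeonhole cascade over `m + 1` thresholds), and a
period `L`. The points agreeing with a point of `R` below `N` and modulo `L` beyond it form a
recognizable superset of `R`, so by inseparability they meet `S`: there are `x ∈ R`, `y ∈ S`
equal off `J` and congruent modulo `L`. Splitting off a minimal solution (Dickson's lemma) of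
the system "`x = y` off `J`" leaves elements of `U*`, `V*` equal off `J`, hence supported in `J`,
so `x - y` lies in one of finitely many cosets `φ + H` of the lattice `H` spanned by `U_J ∪ V_J`.
In the finitely generated group `ℤ^m / H` a nonzero element is not divisible by some positive
integer; taking for `L` a multiple of these integers for the finitely many `φ ∉ H`, the
divisibility of `x - y` by `L` forces `x - y ∈ H`, which yields the common point.
-/

/-- `P*`: all finite `ℕ`-linear combinations of elements of `P`. -/
def nstar {m : ℕ} (P : Set (Fin m → ℕ)) : Set (Fin m → ℕ) :=
  (AddSubmonoid.closure P : Set (Fin m → ℕ))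

/-- Support of a vector. -/
def supp {m : ℕ} (v : Fin m → ℕ) : Set (Fin m) := {i | v i ≠ 0}

/-- `U_J = {p ∈ U : supp p ⊆ J}`. -/
def restrictTo {m : ℕ} (U : Set (Fin m → ℕ)) (J : Set (Fin m)) : Set (Fin m → ℕ) :=
  {p ∈ U | supp p ⊆ J}

/-- A coordinate `j` is strongly unbounded for `A + U*` and `B + V*` if there are
`p ∈ U*`, `q ∈ V*` with `j ∈ supp p = supp q`. -/
def StronglyUnbounded {m : ℕ} (U V : Set (Fin m → ℕ)) (j : Fin m) : Prop :=
  ∃ p ∈ nstar U, ∃ q ∈ nstar V, j ∈ supp p ∧ supp p = supp q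

/-- Coercion of a vector of naturals to a vector of integers. -/
def toInt {m : ℕ} (v : Fin m → ℕ) : Fin m → ℤ := fun i => (v i : ℤ)

/-- `U ⊆ ℕ` is ultimately periodic. -/
def UltPeriodic (U : Set ℕ) : Prop :=
  ∃ n0 p : ℕ, 1 ≤ p ∧ ∀ n ≥ n0, (n ∈ U ↔ n + p ∈ U)

/-- A subset of `ℕ^m` is recognizable if it is a finite union of products
of ultimately periodic subsets of `ℕ`. -/
def Recognizable {m : ℕ} (S : Set (Fin m → ℕ)) : Prop :=
  ∃ (n : ℕ) (U : Fin n → Fin m → Set ℕ),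
    (∀ j i, UltPeriodic (U j i)) ∧ S = ⋃ j, {v | ∀ i, v i ∈ U j i}

section Support

variable {m : ℕ}

lemma supp_add (u v : Fin m → ℕ) : supp (u + v) = supp u ∪ supp v := by
  ext i
  simp only [supp, Pi.add_apply, Set.mem_ofPred_eq, Set.mem_union, ne_eq, Nat.add_eq_zero_iff,
    not_and_or]

lemma supp_sum {ι : Type*} (s : Finset ι) (f : ι → Fin m → ℕ) :
    supp (∑ k ∈ s, f k) = ⋃ k ∈ s, supp (f k) := by
  ext i
  simp [supp, Finset.sum_apply, Finset.sum_eq_zero_iff]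

lemma mem_nstar_restrictTo {U : Set (Fin m → ℕ)} {J : Set (Fin m)} {u : Fin m → ℕ}
    (hu : u ∈ nstar U) (hJ : supp u ⊆ J) : u ∈ nstar (restrictTo U J) := by
  induction hu using AddSubmonoid.closure_induction with
  | mem g hg => exact AddSubmonoid.subset_closure ⟨hg, hJ⟩
  | zero => exact zero_mem _
  | add v w _ _ hv hw =>
    rw [supp_add, Set.union_subset_iff] at hJ
    exact add_mem (hv hJ.1) (hw hJ.2)

lemma exists_mem_nstar_supp_eq {U : Set (Fin m → ℕ)} {C : Set (Fin m)}
    (hC : ∀ i ∈ C, ∃ g ∈ nstar U, i ∈ supp g ∧ supp g ⊆ C) : ∃ p ∈ nstar U, supp p = C := by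
  classical
  choose! g hgU hig hgC using hC
  refine ⟨∑ i ∈ C.toFinset, g i, sum_mem fun i hi => hgU i (by simpa using hi), ?_⟩
  rw [supp_sum]
  refine subset_antisymm (by simpa using hgC) fun i hi => ?_
  exact Set.mem_biUnion (by simpa using hi) (hig i hi)

lemma stronglyUnbounded_comm {U V : Set (Fin m → ℕ)} {j : Fin m} :
    StronglyUnbounded U V j ↔ StronglyUnbounded V U j :=
  ⟨fun ⟨p, hp, q, hq, hj, hpq⟩ => ⟨q, hq, p, hp, hpq ▸ hj, hpq.symm⟩,
    fun ⟨p, hp, q, hq, hj, hpq⟩ => ⟨q, hq, p, hp, hpq ▸ hj, hpq.symm⟩⟩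

lemma stronglyUnbounded_of_forall_supp_subset {U V : Set (Fin m → ℕ)} {C : Set (Fin m)}
    (hU : ∀ i ∈ C, ∃ g ∈ nstar U, i ∈ supp g ∧ supp g ⊆ C)
    (hV : ∀ i ∈ C, ∃ g ∈ nstar V, i ∈ supp g ∧ supp g ⊆ C) {i : Fin m} (hi : i ∈ C) :
    StronglyUnbounded U V i := by
  obtain ⟨p, hp, hpC⟩ := exists_mem_nstar_supp_eq hU
  obtain ⟨q, hq, hqC⟩ := exists_mem_nstar_supp_eq hV
  exact ⟨p, hp, q, hq, hpC ▸ hi, hpC.trans hqC.symm⟩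

lemma exists_mem_nstar_supp_eq_setOf_stronglyUnbounded (U V : Set (Fin m → ℕ)) :
    ∃ p ∈ nstar U, supp p = {j | StronglyUnbounded U V j} :=
  exists_mem_nstar_supp_eq fun _ ⟨p, hp, q, hq, hi, hpq⟩ =>
    ⟨p, hp, hi, fun _ hj => ⟨p, hp, q, hq, hj, hpq⟩⟩

lemma supp_subset_setOf_stronglyUnbounded {U V : Set (Fin m → ℕ)} {u v : Fin m → ℕ}
    (hu : u ∈ nstar U) (hv : v ∈ nstar V)
    (huv : ∀ i ∉ {j | StronglyUnbounded U V j}, u i = v i) :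
    supp u ⊆ {j | StronglyUnbounded U V j} := by
  obtain ⟨p, hp, hpJ⟩ := exists_mem_nstar_supp_eq_setOf_stronglyUnbounded U V
  obtain ⟨q, hq, hqJ⟩ := exists_mem_nstar_supp_eq_setOf_stronglyUnbounded V U
  simp only [← stronglyUnbounded_comm (U := U)] at hqJ
  -- `u + p` and `v + q` both have support `supp u ∪ J`, since `u` and `v` agree off `J`
  have hsupp : supp (u + p) = supp (v + q) := by
    rw [supp_add, supp_add, hpJ, hqJ]
    ext i
    by_cases hi : StronglyUnbounded U V i
    · simp [hi]
    · simp [hi, supp, huv i hi]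
  intro i hi
  exact ⟨u + p, add_mem hu hp, v + q, add_mem hv hq, by rw [supp_add]; exact Or.inl hi, hsupp⟩

lemma mem_nstar_restrictTo_of_eqOn {U V : Set (Fin m → ℕ)} {u v : Fin m → ℕ}
    (hu : u ∈ nstar U) (hv : v ∈ nstar V)
    (huv : ∀ i ∉ {j | StronglyUnbounded U V j}, u i = v i) :
    u ∈ nstar (restrictTo U {j | StronglyUnbounded U V j}) ∧
      v ∈ nstar (restrictTo V {j | StronglyUnbounded U V j}) := by
  refine ⟨mem_nstar_restrictTo hu (supp_subset_setOf_stronglyUnbounded hu hv huv),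
    mem_nstar_restrictTo hv ?_⟩
  simp only [stronglyUnbounded_comm (U := U)] at huv ⊢
  exact supp_subset_setOf_stronglyUnbounded hv hu fun i hi => (huv i hi).symm

end Support

section Cascade

variable {m : ℕ}

lemma mem_nstar_iff_exists_coeff {U : Set (Fin m → ℕ)} [Fintype U] {u : Fin m → ℕ} :
    u ∈ nstar U ↔ ∃ c : U → ℕ, Fintype.linearCombination ℕ (↑) c = u := by
  simp only [nstar, SetLike.mem_coe, AddSubmonoid.mem_closure_iff_of_fintype,
    Fintype.linearCombination_apply, eq_comm]

lemma exists_generator_of_mul_lt {U : Set (Fin m → ℕ)} (hU : U.Finite) :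
    ∃ K, ∀ u ∈ nstar U, ∀ T i, K * T < u i → ∃ g ∈ U, i ∈ supp g ∧ ∀ j ∈ supp g, T < u j := by
  have := hU.fintype
  refine ⟨∑ j, ∑ g : U, (g : Fin m → ℕ) j, fun u hu T i hi => ?_⟩
  obtain ⟨c, rfl⟩ := mem_nstar_iff_exists_coeff.1 hu
  simp only [Fintype.linearCombination_apply, Finset.sum_apply, Pi.smul_apply,
    smul_eq_mul] at hi ⊢
  -- otherwise every generator through `i` occurs at most `T` times, which bounds `u i`
  by_contra! hsmall
  have hc : ∀ g : U, (g : Fin m → ℕ) i ≠ 0 → c g ≤ T := by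
    intro g hgi
    obtain ⟨j, hj, hjT⟩ := hsmall g g.2 hgi
    calc c g ≤ c g * (g : Fin m → ℕ) j := Nat.le_mul_of_pos_right _ (Nat.pos_of_ne_zero hj)
      _ ≤ ∑ g' : U, c g' * (g' : Fin m → ℕ) j :=
        Finset.single_le_sum (f := fun g' : U => c g' * (g' : Fin m → ℕ) j)
          (fun _ _ => Nat.zero_le _) (Finset.mem_univ g)
      _ ≤ T := hjT
  have hsum : ∑ g : U, c g * (g : Fin m → ℕ) i ≤ T * ∑ j, ∑ g : U, (g : Fin m → ℕ) j := by
    calc ∑ g : U, c g * (g : Fin m → ℕ) i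
        ≤ ∑ g : U, T * (g : Fin m → ℕ) i := Finset.sum_le_sum fun g _ =>
          if hgi : (g : Fin m → ℕ) i = 0 then by simp [hgi] else Nat.mul_le_mul_right _ (hc g hgi)
      _ = T * ∑ g : U, (g : Fin m → ℕ) i := (Finset.mul_sum ..).symm
      _ ≤ T * ∑ j, ∑ g : U, (g : Fin m → ℕ) j := Nat.mul_le_mul_left _
          (Finset.single_le_sum (f := fun j => ∑ g : U, (g : Fin m → ℕ) j)
            (fun _ _ => Nat.zero_le _) (Finset.mem_univ i))
  linarith [mul_comm T (∑ j, ∑ g : U, (g : Fin m → ℕ) j)]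

lemma exists_generator_of_mul_succ_le {A U : Set (Fin m → ℕ)} (hA : A.Finite) (hU : U.Finite) :
    ∃ K, ∀ x ∈ Set.image2 (· + ·) A (nstar U), ∀ T i, K * (T + 1) ≤ x i →
      ∃ g ∈ U, i ∈ supp g ∧ ∀ j ∈ supp g, T < x j := by
  obtain ⟨K, hK⟩ := exists_generator_of_mul_lt hU
  obtain ⟨M, hM⟩ := hA.bddAbove
  refine ⟨K + ∑ j, M j + 1, ?_⟩
  rintro _ ⟨a, ha, u, hu, rfl⟩ T i hi
  have hai : a i ≤ ∑ j, M j := (hM ha i).trans (Finset.single_le_sum (fun _ _ => Nat.zero_le _)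
    (Finset.mem_univ i))
  replace hi : (K + ∑ j, M j + 1) * (T + 1) ≤ a i + u i := hi
  obtain ⟨g, hg, hig, hgT⟩ := hK u hu T i (by nlinarith)
  exact ⟨g, hg, hig, fun j hj => (hgT j hj).trans_le (Nat.le_add_left _ _)⟩

lemma exists_le_card_eq_succ_of_antitone {α : Type*} [Fintype α] (B : ℕ → Finset α)
    (hB : Antitone B) : ∃ k ≤ Fintype.card α, B (k + 1) = B k := by
  by_contra! hne
  have hcard : ∀ k ≤ Fintype.card α + 1, (B k).card + k ≤ Fintype.card α := by
    intro k hk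
    induction k with
    | zero => exact Finset.card_le_univ _
    | succ k ih =>
      have := Finset.card_lt_card ((hB (Nat.le_add_right k 1)).lt_of_ne (hne k (by omega)))
      have := ih (by omega)
      omega
  have := hcard _ le_rfl
  omega

lemma exists_mem_nstar_supp_subset {U : Set (Fin m → ℕ)} {x y : Fin m → ℕ} {K N T : ℕ}
    (hx : ∀ T i, K * (T + 1) ≤ x i → ∃ g ∈ U, i ∈ supp g ∧ ∀ j ∈ supp g, T < x j)
    (hxy : ∀ j, x j = y j ∨ (N ≤ x j ∧ N ≤ y j)) (hTN : T ≤ N) {i : Fin m}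
    (hi : K * (T + 1) ≤ x i) :
    ∃ g ∈ nstar U, i ∈ supp g ∧ supp g ⊆ {j | T ≤ x j ∧ T ≤ y j} := by
  obtain ⟨g, hg, hig, hgT⟩ := hx T i hi
  refine ⟨g, AddSubmonoid.subset_closure hg, hig, fun j hj => ?_⟩
  rcases hxy j with h | h
  · exact ⟨(hgT j hj).le, h ▸ (hgT j hj).le⟩
  · exact ⟨(hgT j hj).le, hTN.trans h.2⟩

theorem exists_threshold_stronglyUnbounded {A B U V : Set (Fin m → ℕ)} (hA : A.Finite)
    (hB : B.Finite) (hU : U.Finite) (hV : V.Finite) :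
    ∃ N, ∀ x ∈ Set.image2 (· + ·) A (nstar U), ∀ y ∈ Set.image2 (· + ·) B (nstar V),
      (∀ i, x i = y i ∨ (N ≤ x i ∧ N ≤ y i)) → ∀ i, x i ≠ y i → StronglyUnbounded U V i := by
  obtain ⟨KU, hKU⟩ := exists_generator_of_mul_succ_le hA hU
  obtain ⟨KV, hKV⟩ := exists_generator_of_mul_succ_le hB hV
  obtain ⟨K, hK, hKUK, hKVK⟩ : ∃ K, 1 ≤ K ∧ KU ≤ K ∧ KV ≤ K :=
    ⟨KU + KV + 1, by omega, by omega, by omega⟩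
  set t : ℕ → ℕ := fun k => (fun T => K * (T + 1))^[k] 0
  have ht : ∀ k, t (k + 1) = K * (t k + 1) := fun k => Function.iterate_succ_apply' _ _ _
  have htmono : Monotone t := monotone_nat_of_le_succ fun k => by rw [ht]; nlinarith
  refine ⟨t (m + 1), fun x hx y hy hxy => ?_⟩
  -- once `B (k + 1) = B k`, a generator through a coordinate of `B (k + 1)` occurs so often
  -- that its whole support lies in `B k`: so `B k` is the support of elements of `U*` and `V*`
  set B : ℕ → Finset (Fin m) := fun k => {j | t k ≤ x j ∧ t k ≤ y j}
  have hB : Antitone B := fun k l hkl j => by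
    simp only [B, Finset.mem_filter_univ]
    exact fun h => ⟨(htmono hkl).trans h.1, (htmono hkl).trans h.2⟩
  obtain ⟨k, hkm, hk⟩ := exists_le_card_eq_succ_of_antitone B hB
  rw [Fintype.card_fin] at hkm
  have hU' : ∀ i ∈ (B k : Set (Fin m)), ∃ g ∈ nstar U, i ∈ supp g ∧ supp g ⊆ B k := by
    intro i hi
    rw [← hk, Finset.coe_filter_univ] at hi
    simpa [B] using exists_mem_nstar_supp_subset (hKU x hx) hxy (htmono (by omega : k ≤ m + 1))
      (le_trans (Nat.mul_le_mul_right _ hKUK) ((ht k).symm.le.trans hi.1))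
  have hV' : ∀ i ∈ (B k : Set (Fin m)), ∃ g ∈ nstar V, i ∈ supp g ∧ supp g ⊆ B k := by
    intro i hi
    rw [← hk, Finset.coe_filter_univ] at hi
    simpa [B, and_comm] using exists_mem_nstar_supp_subset (hKV y hy)
      (fun j => (hxy j).imp Eq.symm And.symm) (htmono (by omega : k ≤ m + 1))
      (le_trans (Nat.mul_le_mul_right _ hKVK) ((ht k).symm.le.trans hi.2))
  intro i hi
  refine stronglyUnbounded_of_forall_supp_subset hU' hV' (hB (by omega : k ≤ m + 1) ?_)
  simpa [B] using (hxy i).resolve_left hi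

end Cascade

section Lattice

variable {m : ℕ}

lemma toInt_add (u v : Fin m → ℕ) : toInt (u + v) = toInt u + toInt v := by
  funext i
  simp [toInt]

lemma toInt_zero : toInt (0 : Fin m → ℕ) = 0 := by
  funext i
  simp [toInt]

lemma toInt_mem_span_of_mem_nstar {W : Set (Fin m → ℕ)} {w : Fin m → ℕ} (hw : w ∈ nstar W) :
    toInt w ∈ Submodule.span ℤ (toInt '' W) := by
  induction hw using AddSubmonoid.closure_induction with
  | mem g hg => exact Submodule.subset_span ⟨g, hg, rfl⟩
  | zero => rw [toInt_zero]; exact zero_mem _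
  | add v w _ _ hv hw => rw [toInt_add]; exact add_mem hv hw

lemma exists_eq_sub_of_mem_span {W : Set (Fin m → ℕ)} {σ : Fin m → ℤ}
    (hσ : σ ∈ Submodule.span ℤ (toInt '' W)) :
    ∃ w₁ ∈ nstar W, ∃ w₂ ∈ nstar W, σ = toInt w₁ - toInt w₂ := by
  rw [← Submodule.mem_toAddSubgroup, Submodule.span_int_eq_addSubgroupClosure] at hσ
  induction hσ using AddSubgroup.closure_induction with
  | mem _ hx =>
    obtain ⟨w, hw, rfl⟩ := hx
    exact ⟨w, AddSubmonoid.subset_closure hw, 0, (AddSubmonoid.closure W).zero_mem,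
      by rw [toInt_zero, sub_zero]⟩
  | zero => exact ⟨0, (AddSubmonoid.closure W).zero_mem, 0, (AddSubmonoid.closure W).zero_mem,
      (sub_self _).symm⟩
  | add _ _ _ _ hx hy =>
    obtain ⟨w₁, h₁, w₂, h₂, rfl⟩ := hx
    obtain ⟨w₃, h₃, w₄, h₄, rfl⟩ := hy
    exact ⟨w₁ + w₃, add_mem h₁ h₃, w₂ + w₄, add_mem h₂ h₄, by rw [toInt_add, toInt_add]; abel⟩
  | neg _ _ hx =>
    obtain ⟨w₁, h₁, w₂, h₂, rfl⟩ := hx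
    exact ⟨w₂, h₂, w₁, h₁, neg_sub _ _⟩

lemma exists_toInt_sub_eq_nsmul {x y : Fin m → ℕ} {L : ℕ} (h : ∀ i, x i ≡ y i [MOD L]) :
    ∃ d : Fin m → ℤ, toInt x - toInt y = L • d := by
  choose d hd using fun i => (h i).symm.dvd
  exact ⟨d, funext fun i => by simp [toInt, ← hd]⟩

theorem exists_finite_sub_mem_span {A B U V : Set (Fin m → ℕ)} (hA : A.Finite) (hB : B.Finite)
    (hU : U.Finite) (hV : V.Finite) :
    ∃ Φ : Set (Fin m → ℤ), Φ.Finite ∧ ∀ a ∈ A, ∀ u ∈ nstar U, ∀ b ∈ B, ∀ v ∈ nstar V,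
      (∀ i ∉ {j | StronglyUnbounded U V j}, a i + u i = b i + v i) → ∃ φ ∈ Φ,
        toInt (a + u) - toInt (b + v) - φ ∈
          Submodule.span ℤ (toInt '' restrictTo U {j | StronglyUnbounded U V j} ∪
            toInt '' restrictTo V {j | StronglyUnbounded U V j}) := by
  set J := {j | StronglyUnbounded U V j}
  have := hU.fintype
  have := hV.fintype
  set lcU := Fintype.linearCombination ℕ ((↑) : U → Fin m → ℕ)
  set lcV := Fintype.linearCombination ℕ ((↑) : V → Fin m → ℕ)
  let Sol (a b : Fin m → ℕ) : Set ((U → ℕ) × (V → ℕ)) :=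
    {p | ∀ i ∉ J, a i + lcU p.1 i = b i + lcV p.2 i}
  -- Dickson's lemma
  have hmin : ∀ a b, {p | Minimal (· ∈ Sol a b) p}.Finite := fun a b =>
    WellQuasiOrderedLE.finite_of_isAntichain (setOfPred_minimal_antichain _)
  refine ⟨⋃ a ∈ A, ⋃ b ∈ B, (fun p => toInt (a + lcU p.1) - toInt (b + lcV p.2)) ''
      {p | Minimal (· ∈ Sol a b) p},
    Set.Finite.biUnion hA fun a _ => Set.Finite.biUnion hB fun b _ =>
      Set.Finite.image (fun p => toInt (a + lcU p.1) - toInt (b + lcV p.2)) (hmin a b), ?_⟩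
  intro a ha u hu b hb v hv huv
  obtain ⟨cu, rfl⟩ := mem_nstar_iff_exists_coeff.1 hu
  obtain ⟨cv, rfl⟩ := mem_nstar_iff_exists_coeff.1 hv
  obtain ⟨p, hp, hpmin⟩ := exists_minimal_le_of_wellFoundedLT (· ∈ Sol a b) (cu, cv) huv
  refine ⟨_, Set.mem_biUnion ha (Set.mem_biUnion hb ⟨p, hpmin, rfl⟩), ?_⟩
  obtain ⟨q, hq⟩ : ∃ q, (cu, cv) = p + q := ⟨(cu, cv) - p, (add_tsub_cancel_of_le hp).symm⟩
  obtain ⟨rfl, rfl⟩ := Prod.ext_iff.1 hq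
  simp only [Prod.fst_add, Prod.snd_add, map_add] at huv ⊢
  have hqJ : ∀ i ∉ J, lcU q.1 i = lcV q.2 i := by
    intro i hi
    have h₁ : a i + (lcU p.1 i + lcU q.1 i) = b i + (lcV p.2 i + lcV q.2 i) := huv i hi
    have h₂ : a i + lcU p.1 i = b i + lcV p.2 i := hpmin.1 i hi
    omega
  obtain ⟨hqU, hqV⟩ := mem_nstar_restrictTo_of_eqOn (mem_nstar_iff_exists_coeff.2 ⟨q.1, rfl⟩)
    (mem_nstar_iff_exists_coeff.2 ⟨q.2, rfl⟩) hqJ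
  have hdiff : toInt (a + (lcU p.1 + lcU q.1)) - toInt (b + (lcV p.2 + lcV q.2)) -
      (toInt (a + lcU p.1) - toInt (b + lcV p.2)) = toInt (lcU q.1) - toInt (lcV q.2) := by
    simp only [toInt_add]
    abel
  rw [hdiff]
  exact sub_mem (Submodule.span_mono Set.subset_union_left (toInt_mem_span_of_mem_nstar hqU))
    (Submodule.span_mono Set.subset_union_right (toInt_mem_span_of_mem_nstar hqV))

end Lattice

section Period

variable {M : Type*} [AddCommGroup M] [Module.Finite ℤ M]

theorem exists_pos_forall_nsmul_ne {c : M} (hc : c ≠ 0) : ∃ L : ℕ, 0 < L ∧ ∀ x : M, L • x ≠ c := by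
  set T := Submodule.torsion ℤ M
  by_cases hcT : c ∈ T
  · -- the torsion part is finite, and its exponent kills every `x` with `e • x` torsion
    have : Finite T := Module.finite_of_fg_torsion T Submodule.torsion_isTorsion
    set e := AddMonoid.exponent T
    have he : e ≠ 0 := AddMonoid.exponent_ne_zero_of_finite
    refine ⟨e, Nat.pos_of_ne_zero he, fun x hx => hc ?_⟩
    obtain ⟨a, ha⟩ := (Submodule.mem_torsion_iff c).1 hcT
    have hxT : x ∈ T := (Submodule.mem_torsion_iff x).2
      ⟨⟨a * e, mem_nonZeroDivisors_of_ne_zero (mul_ne_zero (nonZeroDivisors.coe_ne_zero a)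
        (by exact_mod_cast he))⟩, by
          rw [← ha, ← hx, Submonoid.smul_def, Submonoid.smul_def, mul_smul, natCast_zsmul]⟩
    rw [← hx]
    exact congrArg Subtype.val (AddMonoid.exponent_nsmul_eq_zero (⟨x, hxT⟩ : T))
  · -- `M / T` is free, so a coordinate functional `ψ` sees `c`; take `L > |ψ c|`
    obtain ⟨ψ, hψ⟩ := Module.Projective.exists_dual_ne_zero ℤ
      (show T.mkQ c ≠ 0 by simpa [Submodule.Quotient.mk_eq_zero] using hcT)
    refine ⟨(ψ (T.mkQ c)).natAbs + 1, by omega, fun x hx => ?_⟩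
    have hdvd : (((ψ (T.mkQ c)).natAbs + 1 : ℕ) : ℤ) ∣ ψ (T.mkQ c) :=
      ⟨ψ (T.mkQ x), by conv_lhs => rw [← hx, map_nsmul, map_nsmul, nsmul_eq_mul]⟩
    have := Int.natAbs_le_of_dvd_ne_zero hdvd hψ
    omega

theorem exists_pos_forall_nsmul_mem (H : Submodule ℤ M) {Φ : Set M} (hΦ : Φ.Finite) :
    ∃ L : ℕ, 0 < L ∧ ∀ φ ∈ Φ, ∀ x : M, L • x - φ ∈ H → L • x ∈ H := by
  have hL : ∀ φ : M, ∃ L : ℕ, 0 < L ∧ (φ ∉ H → ∀ x : M, L • H.mkQ x ≠ H.mkQ φ) := by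
    intro φ
    by_cases hφ : φ ∈ H
    · exact ⟨1, one_pos, absurd hφ⟩
    · obtain ⟨L, hL, hLφ⟩ := exists_pos_forall_nsmul_ne
        (show H.mkQ φ ≠ 0 by simpa [Submodule.Quotient.mk_eq_zero] using hφ)
      exact ⟨L, hL, fun _ x => hLφ (H.mkQ x)⟩
  choose L hLpos hLφ using hL
  refine ⟨∏ φ ∈ hΦ.toFinset, L φ, Finset.prod_pos fun φ _ => hLpos φ, fun φ hφ x hx => ?_⟩
  by_contra hxH
  have hφH : φ ∉ H := fun h => hxH (by simpa using H.add_mem hx h)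
  obtain ⟨k, hk⟩ := Finset.dvd_prod_of_mem L (hΦ.mem_toFinset.2 hφ)
  apply hLφ φ hφH (k • x)
  rw [← map_nsmul, ← mul_nsmul', ← hk]
  exact (Submodule.Quotient.eq H).2 hx

end Period

section Recognizable

variable {m : ℕ}

def periodicClass (N L n : ℕ) : ℕ := if n < N then n else N + n % L

lemma periodicClass_add_of_le {N L n : ℕ} (hn : N ≤ n) :
    periodicClass N L (n + L) = periodicClass N L n := by
  unfold periodicClass
  rw [if_neg (by omega), if_neg (by omega), Nat.add_mod_right]

lemma periodicClass_lt {N L : ℕ} (hL : 0 < L) (n : ℕ) : periodicClass N L n < N + L := by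
  unfold periodicClass
  split
  · omega
  · have := Nat.mod_lt n hL
    omega

lemma eq_or_modEq_of_periodicClass_eq {N L x y : ℕ}
    (h : periodicClass N L x = periodicClass N L y) :
    x = y ∨ (N ≤ x ∧ N ≤ y ∧ x ≡ y [MOD L]) := by
  unfold periodicClass at h
  split_ifs at h with hx hy hy
  · exact Or.inl h
  · omega
  · omega
  · exact Or.inr ⟨not_lt.1 hx, not_lt.1 hy, by unfold Nat.ModEq; omega⟩

theorem recognizable_preimage_periodicClass {N L : ℕ} (hL : 0 < L) (K : Set (Fin m → ℕ)) :
    Recognizable ((fun y i => periodicClass N L (y i)) ⁻¹' K) := by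
  set π : (Fin m → ℕ) → Fin m → ℕ := fun y i => periodicClass N L (y i)
  have hfin : (K ∩ Set.range π).Finite :=
    (Set.Finite.pi (t := fun _ => Set.Iio (N + L)) fun _ => Set.finite_Iio _).subset
      fun _ ⟨_, y, hy⟩ i _ => hy ▸ periodicClass_lt hL (y i)
  obtain ⟨n, f, hf⟩ := hfin.fin_embedding
  refine ⟨n, fun j i => {k | periodicClass N L k = f j i},
    fun j i => ⟨N, L, hL, fun k hk => by simp [periodicClass_add_of_le hk]⟩, ?_⟩
  ext y
  simp only [Set.mem_preimage, Set.mem_iUnion, Set.mem_ofPred_eq]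
  constructor
  · intro hy
    obtain ⟨j, hj⟩ : π y ∈ Set.range f := hf ▸ ⟨hy, y, rfl⟩
    exact ⟨j, fun i => congrFun hj.symm i⟩
  · rintro ⟨j, hj⟩
    rw [show π y = f j from funext hj]
    exact (hf ▸ Set.mem_range_self j : f j ∈ K ∩ Set.range π).1

end Recognizable

lemma nonempty_inter_of_sub_mem_span {m : ℕ} {A B U V : Set (Fin m → ℕ)} {J : Set (Fin m)}
    {a b u v : Fin m → ℕ} (ha : a ∈ A) (hu : u ∈ nstar U) (hb : b ∈ B) (hv : v ∈ nstar V)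
    (h : toInt (a + u) - toInt (b + v) ∈
      Submodule.span ℤ (toInt '' restrictTo U J ∪ toInt '' restrictTo V J)) :
    ({x : Fin m → ℤ | ∃ a ∈ A, ∃ u ∈ nstar U, ∃ w ∈ nstar (restrictTo U J),
        x = toInt a + toInt u - toInt w} ∩
     {x : Fin m → ℤ | ∃ b ∈ B, ∃ v ∈ nstar V, ∃ w ∈ nstar (restrictTo V J),
        x = toInt b + toInt v - toInt w}).Nonempty := by
  rw [Submodule.span_union, Submodule.mem_sup] at h
  obtain ⟨σ, hσ, τ, hτ, hστ⟩ := h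
  obtain ⟨w₁, hw₁, w₂, hw₂, rfl⟩ := exists_eq_sub_of_mem_span hσ
  obtain ⟨w₃, hw₃, w₄, hw₄, rfl⟩ := exists_eq_sub_of_mem_span hτ
  have hUJ : nstar (restrictTo U J) ⊆ nstar U := AddSubmonoid.closure_mono fun _ hg => hg.1
  have hVJ : nstar (restrictTo V J) ⊆ nstar V := AddSubmonoid.closure_mono fun _ hg => hg.1
  refine ⟨toInt a + toInt (u + w₂) - toInt w₁, ⟨a, ha, u + w₂, add_mem hu (hUJ hw₂), w₁, hw₁, rfl⟩,
    b, hb, v + w₃, add_mem hv (hVJ hw₃), w₄, hw₄, ?_⟩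
  simp only [toInt_add] at hστ ⊢
  linear_combination -hστ

theorem intersection_nonempty_of_inseparable (m : ℕ)
    (A B U V : Set (Fin m → ℕ)) (hA : A.Finite) (hB : B.Finite)
    (hU : U.Finite) (hV : V.Finite)
    (J : Set (Fin m)) (hJ : J = {j | StronglyUnbounded U V j})
    (hinsep : ¬ ∃ S : Set (Fin m → ℕ), Recognizable S ∧
        Set.image2 (· + ·) A (nstar U) ⊆ S ∧
        S ∩ Set.image2 (· + ·) B (nstar V) = ∅) :
    ({x : Fin m → ℤ | ∃ a ∈ A, ∃ u ∈ nstar U, ∃ w ∈ nstar (restrictTo U J),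
        x = toInt a + toInt u - toInt w} ∩
     {x : Fin m → ℤ | ∃ b ∈ B, ∃ v ∈ nstar V, ∃ w ∈ nstar (restrictTo V J),
        x = toInt b + toInt v - toInt w}).Nonempty := by
  subst hJ
  obtain ⟨N, hN⟩ := exists_threshold_stronglyUnbounded hA hB hU hV
  obtain ⟨Φ, hΦ, hΦcoset⟩ := exists_finite_sub_mem_span hA hB hU hV
  obtain ⟨L, hL, hLΦ⟩ := exists_pos_forall_nsmul_mem _ hΦ
  -- the recognizable hull of `A + U*` for threshold `N` and period `L` must meet `B + V*`
  set π : (Fin m → ℕ) → Fin m → ℕ := fun y i => periodicClass N L (y i)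
  obtain ⟨y, ⟨x, hx, hxy⟩, hy⟩ : (π ⁻¹' (π '' Set.image2 (· + ·) A (nstar U)) ∩
      Set.image2 (· + ·) B (nstar V)).Nonempty :=
    Set.nonempty_iff_ne_empty.2 fun h => hinsep ⟨_, recognizable_preimage_periodicClass hL _,
      Set.subset_preimage_image _ _, h⟩
  have hcls i := eq_or_modEq_of_periodicClass_eq (congrFun hxy i)
  have hoff : ∀ i ∉ {j | StronglyUnbounded U V j}, x i = y i := fun i hi => by_contra fun hne =>
    hi (hN x hx y hy (fun j => (hcls j).imp_right fun h => ⟨h.1, h.2.1⟩) i hne)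
  obtain ⟨a, ha, u, hu, rfl⟩ := hx
  obtain ⟨b, hb, v, hv, rfl⟩ := hy
  obtain ⟨φ, hφ, hsub⟩ := hΦcoset a ha u hu b hb v hv hoff
  obtain ⟨d, hd⟩ := exists_toInt_sub_eq_nsmul fun i => (hcls i).elim (· ▸ rfl) (·.2.2)
  rw [hd] at hsub
  refine nonempty_inter_of_sub_mem_span ha hu hb hv ?_
  rw [hd]
  exact hLΦ φ hφ d hsub
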